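/- arXiv:2201.06643 — 4 statements merged into one kernel-verified Lean document; each statement's English description precedes it below -/
import Mathlib

section
/- Define C_{kℓ} = (⟨k, ℓ^⊥⟩ / 4π)(1/|k|² − 1/|ℓ|²) for k, ℓ ∈ ℤ² \ {0}, with ℓ^⊥ = (ℓ₂, −ℓ₁). Then for all nonzero j, k, ℓ ∈ ℤ² with j + k = ℓ: C_{kℓ} + C_{jℓ} − C_{jk} = 0 and C_{kℓ}/|j|² + C_{jℓ}/|k|² − C_{jk}/|ℓ|² = 0. -/
open Real

/-- Squared Euclidean norm of a lattice point `j ∈ ℤ²`, as a real number. -/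
def latticeNormSq (j : ℤ × ℤ) : ℝ := (j.1 : ℝ) ^ 2 + (j.2 : ℝ) ^ 2

/-- The 2D Euler interaction coefficient
`C_{kℓ} = (⟨k, ℓ^⊥⟩ / 4π)(1/|k|² − 1/|ℓ|²)`, where `ℓ^⊥ = (ℓ₂, −ℓ₁)`. -/
noncomputable def eulerC (k l : ℤ × ℤ) : ℝ :=
  (((k.1 : ℝ) * (l.2 : ℝ) - (k.2 : ℝ) * (l.1 : ℝ)) / (4 * π)) *
    (1 / latticeNormSq k - 1 / latticeNormSq l)

lemma latticeNormSq_ne_zero {j : ℤ × ℤ} (hj : j ≠ 0) : latticeNormSq j ≠ 0 := by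
  unfold latticeNormSq
  have : j.1 ≠ 0 ∨ j.2 ≠ 0 := by
    by_contra h
    push_neg at h
    exact hj (Prod.ext h.1 h.2)
  rcases this with h | h
  · positivity
  · positivity

/-- Conservation identities for the Euler interaction coefficients: for nonzero
`j, k, ℓ ∈ ℤ²` with `j + k = ℓ`, both `C_{kℓ} + C_{jℓ} − C_{jk} = 0` (enstrophy) and
`C_{kℓ}/|j|² + C_{jℓ}/|k|² − C_{jk}/|ℓ|² = 0` (energy). -/
theorem eulerC_conservation (j k l : ℤ × ℤ)
    (hj : j ≠ 0) (hk : k ≠ 0) (hl : l ≠ 0) (hsum : j + k = l) :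
    eulerC k l + eulerC j l - eulerC j k = 0 ∧
    eulerC k l / latticeNormSq j + eulerC j l / latticeNormSq k
      - eulerC j k / latticeNormSq l = 0 := by
  have hjn := latticeNormSq_ne_zero hj
  have hkn := latticeNormSq_ne_zero hk
  have hln := latticeNormSq_ne_zero hl
  have hpi : (4 : ℝ) * π ≠ 0 := by positivity
  have hl1 : (l.1 : ℝ) = (j.1 : ℝ) + (k.1 : ℝ) := by
    have : l.1 = j.1 + k.1 := by rw [← hsum]; rfl
    exact_mod_cast this
  have hl2 : (l.2 : ℝ) = (j.2 : ℝ) + (k.2 : ℝ) := by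
    have : l.2 = j.2 + k.2 := by rw [← hsum]; rfl
    exact_mod_cast this
  unfold eulerC
  constructor
  · rw [hl1, hl2]
    field_simp
    ring
  · rw [hl1, hl2]
    field_simp
    ring
end

section
/- If j, k, ℓ ∈ ℤ² \ {0} satisfy ℓ = j + k and |j| = |k|, then C_{jk} = 0 and C_{kℓ} = −C_{jℓ}. -/
open Real

/-- If `ℓ = j + k` with `|j| = |k|`, then `C_{jk} = 0` and `C_{kℓ} = −C_{jℓ}`. -/
theorem eulerC_same_norm (j k l : ℤ × ℤ)
    (hj : j ≠ 0) (hk : k ≠ 0) (hl : l ≠ 0)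
    (hsum : l = j + k) (hnorm : latticeNormSq j = latticeNormSq k) :
    eulerC j k = 0 ∧ eulerC k l = -eulerC j l := by
  subst hsum
  unfold eulerC latticeNormSq at *
  simp only [Prod.fst_add, Prod.snd_add, Int.cast_add] at *
  rw [hnorm]
  constructor
  · ring
  · ring
end

section
/- Let P_h be the transition kernel P_h f(x) = E[f(Φ_{hτ}(x))] where τ₀,…,τ_n are i.i.d. Exp(1) and Φ_{hτ} is the random splitting with dissipative vector field V₀(x) = −νΛx + F prepended to norm-preserving flows. Then the Euclidean norm is a Lyapunov function: (P_h‖·‖)(x) ≤ γ‖x‖ + K for all x, with γ = (1 + (1/2)ναh)^{−1} ∈ (0,1) and K = ‖F‖/(να). -/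
/-!
The flows `φ 1, …, φ n` are isometries, so after one cycle only the dissipative flow has changed
the norm: `‖Φ_{hτ}(x)‖ = ‖φ 0 (hτ₀) x‖ ≤ ‖x‖ e^{-c τ₀} + ‖F‖/(να)` with `c = ναh/2`, since
`τ₀ ≥ 0` almost surely. Taking expectations, `E e^{-c τ₀} = 1/(1 + c)` for `τ₀ ∼ Exp(1)`.
-/

open MeasureTheory ProbabilityTheory Real Set

/-- One cycle of the split dynamics: apply the flows `φ 0, φ 1, …, φ n` in order,
with flow times `t (off), t (off + 1), …, t (off + n)`. -/
def splitCycle {E : Type*} (n : ℕ) (φ : ℕ → ℝ → E → E) (t : ℕ → ℝ) (off : ℕ) (x : E) : E :=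
  (List.range (n + 1)).foldl (fun y k => φ k (t (off + k)) y) x

section ExpMeasure

variable {r b : ℝ}

lemma expMeasure_eq_withDensity (r : ℝ) :
    expMeasure r = volume.withDensity (exponentialPDF r) := rfl

lemma measurable_exponentialPDF (r : ℝ) : Measurable (exponentialPDF r) :=
  (measurable_exponentialPDFReal r).ennreal_ofReal

lemma ae_nonneg_expMeasure (r : ℝ) : ∀ᵐ t ∂expMeasure r, 0 ≤ t := by
  rw [ae_iff, expMeasure_eq_withDensity]
  simp only [not_le]
  rw [show {t : ℝ | t < 0} = Iio 0 from rfl, withDensity_apply _ measurableSet_Iio]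
  exact lintegral_exponentialPDF_of_nonpos le_rfl

lemma toReal_exponentialPDF_mul_exp_neg_mul (hr : 0 < r) (t : ℝ) :
    (exponentialPDF r t).toReal * exp (-(b * t)) =
      (Ici 0).indicator (fun t => r * exp (-(r + b) * t)) t := by
  by_cases ht : 0 ≤ t
  · rw [exponentialPDF_of_nonneg ht, ENNReal.toReal_ofReal (by positivity),
      indicator_of_mem (mem_Ici.2 ht), mul_assoc, ← exp_add]
    ring_nf
  · rw [exponentialPDF_of_neg (not_le.1 ht), indicator_of_notMem (by simpa using ht)]
    simp

lemma integrable_exp_neg_mul_expMeasure (hr : 0 < r) (hb : 0 < r + b) :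
    Integrable (fun t => exp (-(b * t))) (expMeasure r) := by
  rw [expMeasure_eq_withDensity, integrable_withDensity_iff_integrable_smul'
    (measurable_exponentialPDF r) (ae_of_all _ fun _ => ENNReal.ofReal_lt_top)]
  simp only [smul_eq_mul, toReal_exponentialPDF_mul_exp_neg_mul hr]
  rw [integrable_indicator_iff measurableSet_Ici, integrableOn_Ici_iff_integrableOn_Ioi]
  exact (exp_neg_integrableOn_Ioi 0 hb).const_mul r

lemma integral_exp_neg_mul_expMeasure (hr : 0 < r) (hb : 0 < r + b) :
    ∫ t, exp (-(b * t)) ∂expMeasure r = r / (r + b) := by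
  rw [expMeasure_eq_withDensity, integral_withDensity_eq_integral_toReal_smul
    (measurable_exponentialPDF r) (ae_of_all _ fun _ => ENNReal.ofReal_lt_top)]
  simp only [smul_eq_mul, toReal_exponentialPDF_mul_exp_neg_mul hr]
  rw [integral_indicator measurableSet_Ici, integral_Ici_eq_integral_Ioi, integral_const_mul,
    integral_exp_mul_Ioi (by linarith) 0]
  field_simp
  simp

end ExpMeasure

lemma norm_foldl_eq_of_forall_norm_eq {α E : Type*} [Norm E] (f : α → E → E) (l : List α)
    (hf : ∀ a ∈ l, ∀ y, ‖f a y‖ = ‖y‖) (y : E) :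
    ‖l.foldl (fun y a => f a y) y‖ = ‖y‖ := by
  induction l generalizing y with
  | nil => rfl
  | cons a l ih =>
    rw [List.foldl_cons, ih (fun k hk => hf k (List.mem_cons_of_mem a hk)),
      hf a List.mem_cons_self]

lemma norm_splitCycle {E : Type*} [Norm E] {n : ℕ} {φ : ℕ → ℝ → E → E}
    (hnorm : ∀ k, 1 ≤ k → k ≤ n → ∀ (s : ℝ) (y : E), ‖φ k s y‖ = ‖y‖)
    (t : ℕ → ℝ) (off : ℕ) (x : E) :
    ‖splitCycle n φ t off x‖ = ‖φ 0 (t off) x‖ := by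
  rw [splitCycle, List.range_succ_eq_map, List.foldl_cons, List.foldl_map, add_zero]
  refine norm_foldl_eq_of_forall_norm_eq (fun (k : ℕ) y => φ k.succ (t (off + k.succ)) y) _ ?_ _
  intro k hk y
  exact hnorm _ k.succ_pos (List.mem_range.1 hk) _ y

theorem norm_lyapunov_general {d n : ℕ} {Ω : Type*} [MeasureSpace Ω]
    [IsProbabilityMeasure (ℙ : Measure Ω)]
    (ν α : ℝ) (hν : 0 < ν) (hα : 0 < α) (F : EuclideanSpace ℝ (Fin d))
    (φ : ℕ → ℝ → EuclideanSpace ℝ (Fin d) → EuclideanSpace ℝ (Fin d))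
    (hφ0 : ∀ t ≥ (0 : ℝ), ∀ x : EuclideanSpace ℝ (Fin d),
      ‖φ 0 t x‖ ≤ ‖x‖ * Real.exp (-(ν * α * t / 2)) + ‖F‖ / (ν * α))
    (hnorm : ∀ k, 1 ≤ k → k ≤ n →
      ∀ (t : ℝ) (y : EuclideanSpace ℝ (Fin d)), ‖φ k t y‖ = ‖y‖)
    (h : ℝ) (hh : 0 < h)
    (τ : ℕ → Ω → ℝ) (hmeas : ∀ k, Measurable (τ k))
    (hdist : ∀ k, Measure.map (τ k) ℙ = expMeasure 1) :
    ∀ x : EuclideanSpace ℝ (Fin d),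
      ∫ ω, ‖splitCycle n φ (fun k => h * τ k ω) 0 x‖ ∂ℙ ≤
        (1 + ν * α * h / 2)⁻¹ * ‖x‖ + ‖F‖ / (ν * α) := by
  intro x
  set c := ν * α * h / 2
  have hc : 0 < 1 + c := by positivity
  have := isProbabilityMeasure_expMeasure one_pos
  set G : ℝ → ℝ := fun s => ‖x‖ * exp (-(c * s)) + ‖F‖ / (ν * α)
  have hexp_int := (integrable_exp_neg_mul_expMeasure one_pos hc).const_mul ‖x‖
  have hG_int : Integrable G (expMeasure 1) := hexp_int.add (integrable_const _)
  have hG_integral : ∫ s, G s ∂expMeasure 1 = (1 + c)⁻¹ * ‖x‖ + ‖F‖ / (ν * α) := by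
    rw [integral_add hexp_int (integrable_const _), integral_const_mul, integral_exp_neg_mul_expMeasure one_pos hc,
      integral_const, probReal_univ, one_smul, one_div, mul_comm]
  rw [← hdist 0] at hG_int hG_integral
  have hτ_nonneg : ∀ᵐ ω ∂ℙ, 0 ≤ τ 0 ω :=
    ae_of_ae_map (hmeas 0).aemeasurable (hdist 0 ▸ ae_nonneg_expMeasure 1)
  calc ∫ ω, ‖splitCycle n φ (fun k => h * τ k ω) 0 x‖ ∂ℙ
      ≤ ∫ ω, G (τ 0 ω) ∂ℙ := by
        refine integral_mono_of_nonneg (ae_of_all _ fun _ => norm_nonneg _)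
          (hG_int.comp_measurable (hmeas 0)) ?_
        filter_upwards [hτ_nonneg] with ω hω
        rw [norm_splitCycle hnorm]
        refine (hφ0 _ (by positivity) x).trans_eq ?_
        simp only [G, c]
        ring_nf
    _ = (1 + c)⁻¹ * ‖x‖ + ‖F‖ / (ν * α) := by
        rw [← hG_integral, integral_map (hmeas 0).aemeasurable hG_int.aestronglyMeasurable]

/-- The Euclidean norm is a Lyapunov function for the transition kernel of dissipative
random splitting: `P_h‖·‖(x) ≤ γ‖x‖ + K` with `γ = (1 + ναh/2)⁻¹` and `K = ‖F‖/(να)`. -/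
theorem norm_lyapunov {d n : ℕ} {Ω : Type*} [MeasureSpace Ω]
    [IsProbabilityMeasure (ℙ : Measure Ω)]
    (ν α : ℝ) (hν : 0 < ν) (hα : 0 < α) (F : EuclideanSpace ℝ (Fin d))
    (φ : ℕ → ℝ → EuclideanSpace ℝ (Fin d) → EuclideanSpace ℝ (Fin d))
    (hφ0 : ∀ t ≥ (0 : ℝ), ∀ x : EuclideanSpace ℝ (Fin d),
      ‖φ 0 t x‖ ≤ ‖x‖ * Real.exp (-(ν * α * t / 2)) + ‖F‖ / (ν * α))
    (hnorm : ∀ k, 1 ≤ k → k ≤ n →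
      ∀ (t : ℝ) (y : EuclideanSpace ℝ (Fin d)), ‖φ k t y‖ = ‖y‖)
    (h : ℝ) (hh : 0 < h)
    (τ : ℕ → Ω → ℝ) (hmeas : ∀ k, Measurable (τ k))
    (hindep : iIndepFun τ ℙ)
    (hdist : ∀ k, Measure.map (τ k) ℙ = expMeasure 1) :
    ∀ x : EuclideanSpace ℝ (Fin d),
      ∫ ω, ‖splitCycle n φ (fun k => h * τ k ω) 0 x‖ ∂ℙ ≤
        (1 + ν * α * h / 2)⁻¹ * ‖x‖ + ‖F‖ / (ν * α) :=
  norm_lyapunov_general ν α hν hα F φ hφ0 hnorm h hh τ hmeas hdist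
end

section
/- In the setting of the previous Grönwall bound, with additionally ‖D²V(x)‖ ≤ C on X, the second derivative of the flow satisfies sup_{x∈X} ‖D²φ_t(x)‖ ≤ C t e^{3Ct} for all t ≥ 0. -/
/-!
`D²φ_t(x)` solves the linear equation `B' = DV(φ_t x) ∘ B + D²V(φ_t x)(Dφ_t x, Dφ_t x)` with
`B 0 = 0`. Grönwall for the first variational equation gives `‖Dφ_s(x)‖ ≤ e^{Cs}`, so on `[0, t]`
the forcing term is at most `C e^{2Ct}`; the inhomogeneous Grönwall bound for `B` is then
`C e^{2Ct} · (e^{Ct} - 1) / C ≤ C e^{2Ct} · t e^{Ct}`.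
-/

open Real Set

namespace ContinuousLinearMap

variable {𝕜 E E' F F' G : Type*} [NontriviallyNormedField 𝕜]
  [SeminormedAddCommGroup E] [NormedSpace 𝕜 E] [SeminormedAddCommGroup E'] [NormedSpace 𝕜 E']
  [SeminormedAddCommGroup F] [NormedSpace 𝕜 F] [SeminormedAddCommGroup F'] [NormedSpace 𝕜 F']
  [SeminormedAddCommGroup G] [NormedSpace 𝕜 G]

theorem norm_bilinearComp_le (A : E →L[𝕜] F →L[𝕜] G) (P : E' →L[𝕜] E) (Q : F' →L[𝕜] F) :
    ‖A.bilinearComp P Q‖ ≤ ‖A‖ * ‖P‖ * ‖Q‖ := by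
  refine opNorm_le_bound₂ _ (by positivity) fun u v => ?_
  calc ‖A (P u) (Q v)‖ ≤ ‖A‖ * ‖P u‖ * ‖Q v‖ := A.le_opNorm₂ _ _
    _ ≤ ‖A‖ * (‖P‖ * ‖u‖) * (‖Q‖ * ‖v‖) := by gcongr <;> exact le_opNorm _ _
    _ = ‖A‖ * ‖P‖ * ‖Q‖ * ‖u‖ * ‖v‖ := by ring

theorem norm_compL_apply_le (A : F →L[𝕜] G) : ‖compL 𝕜 E F G A‖ ≤ ‖A‖ :=
  opNorm_le_bound _ (norm_nonneg A) fun B => opNorm_comp_le A B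

theorem norm_bilinearComp_add_compL_comp_le (A₂ : E →L[𝕜] E →L[𝕜] E) (A₁ P : E →L[𝕜] E)
    (B : E →L[𝕜] E →L[𝕜] E) :
    ‖A₂.bilinearComp P P + (compL 𝕜 E E E A₁).comp B‖ ≤ ‖A₂‖ * ‖P‖ ^ 2 + ‖A₁‖ * ‖B‖ :=
  calc ‖A₂.bilinearComp P P + (compL 𝕜 E E E A₁).comp B‖
      ≤ ‖A₂.bilinearComp P P‖ + ‖(compL 𝕜 E E E A₁).comp B‖ := norm_add_le _ _
    _ ≤ ‖A₂‖ * ‖P‖ * ‖P‖ + ‖compL 𝕜 E E E A₁‖ * ‖B‖ := by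
        gcongr
        · exact norm_bilinearComp_le _ _ _
        · exact opNorm_comp_le _ _
    _ ≤ ‖A₂‖ * ‖P‖ ^ 2 + ‖A₁‖ * ‖B‖ := by
        rw [mul_assoc, ← sq]; gcongr; exact norm_compL_apply_le _

end ContinuousLinearMap

theorem Real.exp_sub_one_le_mul_exp (y : ℝ) : exp y - 1 ≤ y * exp y := by
  have h := mul_le_mul_of_nonneg_left (one_sub_le_exp_neg y) (exp_pos y).le
  rw [← exp_add, add_neg_cancel, exp_zero] at h
  linarith

theorem gronwallBound_zero_le {K ε : ℝ} (hK : 0 ≤ K) (hε : 0 ≤ ε) (x : ℝ) :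
    gronwallBound 0 K ε x ≤ ε * x * exp (K * x) := by
  rcases hK.eq_or_lt with rfl | hK
  · simp [gronwallBound_K0]
  · rw [gronwallBound_of_K_ne_0 hK.ne']
    dsimp only
    rw [zero_mul, zero_add, div_mul_eq_mul_div, div_le_iff₀ hK]
    calc ε * (exp (K * x) - 1) ≤ ε * (K * x * exp (K * x)) := by
          gcongr; exact exp_sub_one_le_mul_exp _
      _ = ε * x * exp (K * x) * K := by ring

section Gronwall

variable {E : Type*} [NormedAddCommGroup E] [NormedSpace ℝ E] {f f' : ℝ → E} {K t : ℝ}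

theorem norm_le_mul_exp_of_norm_deriv_le {δ : ℝ} (hf : ∀ s ∈ Icc 0 t, HasDerivAt f (f' s) s)
    (h0 : ‖f 0‖ ≤ δ) (bound : ∀ s ∈ Ico 0 t, ‖f' s‖ ≤ K * ‖f s‖) :
    ∀ s ∈ Icc 0 t, ‖f s‖ ≤ δ * exp (K * s) := by
  intro s hs
  have := norm_le_gronwallBound_of_norm_deriv_right_le (ε := 0)
    (fun u hu => (hf u hu).continuousAt.continuousWithinAt)
    (fun u hu => (hf u (Ico_subset_Icc_self hu)).hasDerivWithinAt) h0
    (fun u hu => by rw [add_zero]; exact bound u hu) s hs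
  rwa [sub_zero, gronwallBound_ε0] at this

theorem norm_le_mul_mul_exp_of_norm_deriv_le {ε : ℝ} (hK : 0 ≤ K) (hε : 0 ≤ ε) (ht : 0 ≤ t)
    (hf : ∀ s ∈ Icc 0 t, HasDerivAt f (f' s) s) (h0 : f 0 = 0)
    (bound : ∀ s ∈ Ico 0 t, ‖f' s‖ ≤ K * ‖f s‖ + ε) :
    ‖f t‖ ≤ ε * t * exp (K * t) := by
  have := norm_le_gronwallBound_of_norm_deriv_right_le
    (fun u hu => (hf u hu).continuousAt.continuousWithinAt)
    (fun u hu => (hf u (Ico_subset_Icc_self hu)).hasDerivWithinAt) (by rw [h0, norm_zero])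
    bound t (right_mem_Icc.2 ht)
  rw [sub_zero] at this
  exact this.trans (gronwallBound_zero_le hK hε t)

end Gronwall

theorem flow_second_deriv_bound_general {d : ℕ} (C : ℝ) (hC : 0 ≤ C)
    (V : EuclideanSpace ℝ (Fin d) → EuclideanSpace ℝ (Fin d))
    (X : Set (EuclideanSpace ℝ (Fin d)))
    (φ : ℝ → EuclideanSpace ℝ (Fin d) → EuclideanSpace ℝ (Fin d))
    (hXinv : ∀ x ∈ X, ∀ t ≥ (0 : ℝ), φ t x ∈ X)
    (hDV : ∀ x ∈ X, ‖fderiv ℝ V x‖ ≤ C)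
    (hD2V : ∀ x ∈ X, ‖fderiv ℝ (fderiv ℝ V) x‖ ≤ C) :
    ∀ x ∈ X,
    ∀ (D : ℝ → EuclideanSpace ℝ (Fin d) →L[ℝ] EuclideanSpace ℝ (Fin d)),
      D 0 = ContinuousLinearMap.id ℝ (EuclideanSpace ℝ (Fin d)) →
      (∀ t : ℝ, HasDerivAt D ((fderiv ℝ V (φ t x)).comp (D t)) t) →
    ∀ (B : ℝ → EuclideanSpace ℝ (Fin d) →L[ℝ]
        EuclideanSpace ℝ (Fin d) →L[ℝ] EuclideanSpace ℝ (Fin d)),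
      B 0 = 0 →
      (∀ t : ℝ, HasDerivAt B
        (((fderiv ℝ (fderiv ℝ V) (φ t x)).bilinearComp (D t) (D t)) +
          (ContinuousLinearMap.compL ℝ (EuclideanSpace ℝ (Fin d)) (EuclideanSpace ℝ (Fin d))
            (EuclideanSpace ℝ (Fin d)) (fderiv ℝ V (φ t x))).comp (B t)) t) →
      ∀ t ≥ (0 : ℝ), ‖B t‖ ≤ C * t * Real.exp (3 * C * t) := by
  intro x hx D hD0 hD' B hB0 hB' t ht
  have hφX : ∀ s ∈ Ico 0 t, φ s x ∈ X := fun s hs => hXinv x hx s hs.1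
  have hD : ∀ s ∈ Icc 0 t, ‖D s‖ ≤ 1 * exp (C * s) :=
    norm_le_mul_exp_of_norm_deriv_le (fun s _ => hD' s)
      (by rw [hD0]; exact ContinuousLinearMap.norm_id_le) fun s hs =>
        (ContinuousLinearMap.opNorm_comp_le _ _).trans (by gcongr; exact hDV _ (hφX s hs))
  have hforcing : ∀ s ∈ Ico 0 t, ‖fderiv ℝ (fderiv ℝ V) (φ s x)‖ * ‖D s‖ ^ 2 ≤
      C * exp (2 * C * t) := fun s hs => by
    have hDs : ‖D s‖ ≤ exp (C * t) := (hD s (Ico_subset_Icc_self hs)).trans <| by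
      rw [one_mul]; exact exp_le_exp.2 (mul_le_mul_of_nonneg_left hs.2.le hC)
    calc ‖fderiv ℝ (fderiv ℝ V) (φ s x)‖ * ‖D s‖ ^ 2 ≤ C * exp (C * t) ^ 2 := by
          gcongr; exact hD2V _ (hφX s hs)
      _ = C * exp (2 * C * t) := by rw [← exp_nat_mul]; ring_nf
  have hB := norm_le_mul_mul_exp_of_norm_deriv_le (f := B)
    (ε := C * exp (2 * C * t)) hC (by positivity) ht (fun s _ => hB' s) hB0
    fun s hs => by
      refine (ContinuousLinearMap.norm_bilinearComp_add_compL_comp_le _ _ _ _).trans ?_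
      linarith [hforcing s hs, mul_le_mul_of_nonneg_right (hDV _ (hφX s hs)) (norm_nonneg (B s))]
  calc ‖B t‖ ≤ C * exp (2 * C * t) * t * exp (C * t) := hB
    _ = C * t * exp (3 * C * t) := by
        rw [show 3 * C * t = 2 * C * t + C * t by ring, exp_add]; ring

/-- Grönwall bound on the second derivative of the flow: if `‖V‖, ‖DV‖, ‖D²V‖ ≤ C` on a
flow-invariant set `X`, `D t = Dφ_t(x)` solves the variational equation (so `‖D t‖ ≤ e^{Ct}`),
and `B t = D²φ_t(x)` solves the second variational equation, then `‖D²φ_t(x)‖ ≤ C t e^{3Ct}`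
for all `x ∈ X` and `t ≥ 0`. -/
theorem flow_second_deriv_bound {d : ℕ} (C : ℝ) (hC : 0 ≤ C)
    (V : EuclideanSpace ℝ (Fin d) → EuclideanSpace ℝ (Fin d))
    (X : Set (EuclideanSpace ℝ (Fin d)))
    (φ : ℝ → EuclideanSpace ℝ (Fin d) → EuclideanSpace ℝ (Fin d))
    (hφ0 : ∀ x, φ 0 x = x)
    (hφ : ∀ x, ∀ t : ℝ, HasDerivAt (fun s => φ s x) (V (φ t x)) t)
    (hXinv : ∀ x ∈ X, ∀ t ≥ (0 : ℝ), φ t x ∈ X)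
    (hV : ∀ x ∈ X, ‖V x‖ ≤ C)
    (hDV : ∀ x ∈ X, ‖fderiv ℝ V x‖ ≤ C)
    (hD2V : ∀ x ∈ X, ‖fderiv ℝ (fderiv ℝ V) x‖ ≤ C) :
    ∀ x ∈ X,
    ∀ (D : ℝ → EuclideanSpace ℝ (Fin d) →L[ℝ] EuclideanSpace ℝ (Fin d)),
      D 0 = ContinuousLinearMap.id ℝ (EuclideanSpace ℝ (Fin d)) →
      (∀ t : ℝ, HasDerivAt D ((fderiv ℝ V (φ t x)).comp (D t)) t) →
    ∀ (B : ℝ → EuclideanSpace ℝ (Fin d) →L[ℝ]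
        EuclideanSpace ℝ (Fin d) →L[ℝ] EuclideanSpace ℝ (Fin d)),
      B 0 = 0 →
      (∀ t : ℝ, HasDerivAt B
        (((fderiv ℝ (fderiv ℝ V) (φ t x)).bilinearComp (D t) (D t)) +
          (ContinuousLinearMap.compL ℝ (EuclideanSpace ℝ (Fin d)) (EuclideanSpace ℝ (Fin d))
            (EuclideanSpace ℝ (Fin d)) (fderiv ℝ V (φ t x))).comp (B t)) t) →
      ∀ t ≥ (0 : ℝ), ‖B t‖ ≤ C * t * Real.exp (3 * C * t) :=
  flow_second_deriv_bound_general C hC V X φ hXinv hDV hD2V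
end
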